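/- arXiv:2308.13967 — 3 statements merged into one kernel-verified Lean document; each statement's English description precedes it below -/
import Mathlib

section
/- A shift space X ⊆ 𝒜^∞ is d̄_M-stable if and only if its measure center X^+ is d̄_M-stable. -/
open MeasureTheory Filter Topology

namespace DbarPaper

variable {A : Type} [Fintype A] [DecidableEq A] [Inhabited A]
  [TopologicalSpace A] [DiscreteTopology A]
  [MeasurableSpace A] [MeasurableSingletonClass A]

/-- The shift map on the full shift `𝒜^∞ = ℕ → A`. -/
def shift : (ℕ → A) → (ℕ → A) := fun x n => x (n + 1)

/-- A shift space: a nonempty, closed, shift-invariant subset of the full shift. -/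
def ShiftSpace (X : Set (ℕ → A)) : Prop :=
  X.Nonempty ∧ IsClosed X ∧ ∀ x ∈ X, shift x ∈ X

/-- The word `w` appears in the sequence `x`. -/
def occursIn (w : List A) (x : ℕ → A) : Prop :=
  ∃ i : ℕ, w = List.ofFn (fun k : Fin w.length => x (i + (k : ℕ)))

/-- The language of a set `X`: all finite words appearing in points of `X`. -/
def lang (X : Set (ℕ → A)) : Set (List A) := {w | ∃ x ∈ X, occursIn w x}

/-- Words of length `n` in the language of `X`. -/
def langN (n : ℕ) (X : Set (ℕ → A)) : Set (List A) := {w | w ∈ lang X ∧ w.length = n}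

/-- The pseudometric `d̄` on the full shift. -/
noncomputable def dbar (x y : ℕ → A) : ℝ :=
  Filter.limsup
    (fun n => (((Finset.range n).filter (fun j => x j ≠ y j)).card : ℝ) / (n : ℝ))
    Filter.atTop

/-- Hausdorff "distance" between two sets induced by a `ℝ`-valued distance. -/
noncomputable def hausdist {Z : Type*} (d : Z → Z → ℝ) (P Q : Set Z) : ℝ :=
  max (⨆ p : P, ⨅ q : Q, d p q) (⨆ q : Q, ⨅ p : P, d p q)

/-- A probability measure is shift-invariant. -/
def invariantPM (μ : ProbabilityMeasure (ℕ → A)) : Prop :=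
  (μ : Measure (ℕ → A)).map shift = (μ : Measure (ℕ → A))

/-- `M_σ(X)`: shift-invariant Borel probability measures giving `X` full measure. -/
def Msigma (X : Set (ℕ → A)) : Set (ProbabilityMeasure (ℕ → A)) :=
  {μ | invariantPM μ ∧ μ X = 1}

/-- `ξ` is a joining of `μ` and `ν`: a `σ×σ`-invariant measure on the product with
marginals `μ` and `ν`. -/
def IsJoining (ξ : Measure ((ℕ → A) × (ℕ → A))) (μ ν : ProbabilityMeasure (ℕ → A)) : Prop :=
  ξ.map (Prod.map shift shift) = ξ ∧
  ξ.map Prod.fst = (μ : Measure (ℕ → A)) ∧ ξ.map Prod.snd = (ν : Measure (ℕ → A))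

/-- Ornstein's metric `d̄_M` on invariant measures. -/
noncomputable def dbarM (μ ν : ProbabilityMeasure (ℕ → A)) : ℝ :=
  sInf {r : ℝ | ∃ ξ : Measure ((ℕ → A) × (ℕ → A)),
    IsJoining ξ μ ν ∧ r = (ξ {p | p.1 0 ≠ p.2 0}).toReal}

/-- `d̄_M`-stability of a shift space (Austin). -/
def DbarMStable (X : Set (ℕ → A)) : Prop :=
  ∀ ε : ℝ, 0 < ε → ∃ U : Set (ProbabilityMeasure (ℕ → A)), IsOpen U ∧ Msigma X ⊆ U ∧
    ∀ ν ∈ U, invariantPM ν → ∃ μ ∈ Msigma X, dbarM μ ν < ε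

/-- The infinite concatenation of a sequence of (nonempty) words. -/
def concatSeq (w : ℕ → List A) : ℕ → A := fun n =>
  ((List.ofFn (fun i : Fin (n + 1) => w (i : ℕ))).flatten).getD n default

/-- The `d̄`-shadowing property. -/
def DbarShadowing (X : Set (ℕ → A)) : Prop :=
  ∀ ε : ℝ, 0 < ε → ∃ N : ℕ, 0 < N ∧ ∀ w : ℕ → List A,
    (∀ j, w j ∈ lang X) → (∀ j, N ≤ (w j).length) →
    ∃ x' ∈ X, dbar (concatSeq w) x' < ε

/-- `U_n(X)`: the union of cylinders of words of length `n` in the language of `X`. -/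
def cylNbhd (X : Set (ℕ → A)) (n : ℕ) : Set (ℕ → A) :=
  {x | List.ofFn (fun k : Fin n => x (k : ℕ)) ∈ lang X}

/-- The `n`-th (topological) Markov approximation of `X`: all sequences whose subwords of
length `n+1` belong to the language of `X`. -/
def markovApprox (X : Set (ℕ → A)) (n : ℕ) : Set (ℕ → A) :=
  {x | ∀ i : ℕ, List.ofFn (fun k : Fin (n + 1) => x (i + (k : ℕ))) ∈ lang X}

/-- Transitivity, in terms of the language. -/
def TransitiveShift (X : Set (ℕ → A)) : Prop :=
  ∀ u ∈ lang X, ∀ w ∈ lang X, ∃ v : List A, u ++ v ++ w ∈ lang X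

/-- Topological mixing, in terms of the language. -/
def MixingShift (X : Set (ℕ → A)) : Prop :=
  ∀ u ∈ lang X, ∀ w ∈ lang X, ∃ N : ℕ, ∀ m : ℕ, N ≤ m →
    ∃ v : List A, v.length = m ∧ u ++ v ++ w ∈ lang X

/-- Chain mixing: all but finitely many Markov approximations are topologically mixing. -/
def ChainMixing (X : Set (ℕ → A)) : Prop :=
  ∃ N : ℕ, ∀ n : ℕ, N ≤ n → MixingShift (markovApprox X n)

/-- `C` is the measure center of `X`: the smallest shift space contained in `X` of full
measure for every invariant measure of `X`. -/
def IsMeasureCenter (X C : Set (ℕ → A)) : Prop :=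
  ShiftSpace C ∧ C ⊆ X ∧ (∀ μ ∈ Msigma X, μ C = 1) ∧
  ∀ Y : Set (ℕ → A), ShiftSpace Y → Y ⊆ X → (∀ μ ∈ Msigma X, μ Y = 1) → C ⊆ Y

/-- Measure of the cylinder determined by a word of length `n`. -/
noncomputable def cylMeasure (μ : ProbabilityMeasure (ℕ → A)) {n : ℕ} (w : Fin n → A) : ℝ :=
  ((μ : Measure (ℕ → A)) {x | ∀ k : Fin n, x (k : ℕ) = w k}).toReal

/-- Entropy of the partition into cylinders of length `n`. -/
noncomputable def blockEntropy (μ : ProbabilityMeasure (ℕ → A)) (n : ℕ) : ℝ :=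
  -∑ w : Fin n → A, cylMeasure μ w * Real.log (cylMeasure μ w)

/-- Kolmogorov–Sinai entropy of a shift-invariant measure. -/
noncomputable def ksEntropy (μ : ProbabilityMeasure (ℕ → A)) : ℝ :=
  Filter.limsup (fun n => blockEntropy μ n / (n : ℝ)) Filter.atTop

/-- `μ` is ergodic for the shift. -/
def ErgodicPM (μ : ProbabilityMeasure (ℕ → A)) : Prop :=
  Ergodic shift (μ : Measure (ℕ → A))

/-- Ergodic measures are entropy dense in `M_σ(X)`. -/
def EntropyDense (X : Set (ℕ → A)) : Prop :=
  ∀ μ ∈ Msigma X, ∀ U : Set (ProbabilityMeasure (ℕ → A)), IsOpen U → μ ∈ U →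
    ∀ ε : ℝ, 0 < ε →
      ∃ ν ∈ Msigma X, ν ∈ U ∧ ErgodicPM ν ∧ |ksEntropy ν - ksEntropy μ| < ε

/-- Topological entropy of a shift space. -/
noncomputable def topEntropy (X : Set (ℕ → A)) : ℝ :=
  Filter.limsup (fun n => Real.log (Nat.card ↥(langN n X)) / (n : ℝ)) Filter.atTop

/-- The standard metric on the full shift. -/
noncomputable def rho (x y : ℕ → A) : ℝ :=
  open scoped Classical in
  if x = y then 0 else (2 : ℝ) ^ (-((sInf {j : ℕ | x j ≠ y j} : ℕ) : ℤ))

/-- Proximality of a shift space. -/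
def ProximalShift (X : Set (ℕ → A)) : Prop :=
  ∀ x ∈ X, ∀ y ∈ X,
    Filter.liminf (fun n => rho (shift^[n] x) (shift^[n] y)) Filter.atTop = 0

/-- Minimality of a shift space. -/
def MinimalShift (X : Set (ℕ → A)) : Prop :=
  ShiftSpace X ∧ ∀ Y : Set (ℕ → A), ShiftSpace Y → Y ⊆ X → Y = X

/-- An `A`-labeled directed multigraph on vertices `V` with edges `E`. -/
structure LabeledGraph (A V E : Type*) where
  src : E → V
  dst : E → V
  lab : E → A

namespace LabeledGraph

variable {A' V E : Type*}

/-- `es` is a path in `G` from `u` to `v`. -/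
def PathFromTo (G : LabeledGraph A' V E) (es : List E) (u v : V) : Prop :=
  es.Chain' (fun e f => G.dst e = G.src f) ∧
  es.head?.map G.src = some u ∧ es.getLast?.map G.dst = some v

/-- `G` is strongly connected. -/
def StronglyConnected (G : LabeledGraph A' V E) : Prop :=
  ∀ u v : V, ∃ es : List E, G.PathFromTo es u v

/-- `d` is the period of `G`: the gcd of lengths of closed paths. -/
def HasPeriod (G : LabeledGraph A' V E) (d : ℕ) : Prop :=
  (∀ (es : List E) (u : V), G.PathFromTo es u u → d ∣ es.length) ∧
  ∀ d' : ℕ, (∀ (es : List E) (u : V), G.PathFromTo es u u → d' ∣ es.length) → d' ∣ d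

/-- `b` is a safe symbol for `G`. -/
def SafeSymbol (G : LabeledGraph A' V E) (b : A') : Prop :=
  ∀ e : E, ∃ e' : E, G.src e' = G.src e ∧ G.dst e' = G.dst e ∧ G.lab e' = b

/-- The shift space presented by the labeled graph `G`: labels read along infinite paths. -/
def presents (G : LabeledGraph A' V E) : Set (ℕ → A') :=
  {x | ∃ e : ℕ → E, (∀ j, G.dst (e j) = G.src (e (j + 1))) ∧ ∀ j, x j = G.lab (e j)}

end LabeledGraph

/-- The coupling of a family of labeled graphs: an edge labeled `a` from `v` to `v'` exists
iff each `G k` has an edge from `v k` to `v' k` labeled `a`. -/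
def coupling {A' : Type*} {n : ℕ} {V E : Fin n → Type*}
    (G : ∀ k, LabeledGraph A' (V k) (E k)) :
    LabeledGraph A' (∀ k, V k) {p : (∀ k, E k) × A' // ∀ k, (G k).lab (p.1 k) = p.2} where
  src p := fun k => (G k).src (p.1.1 k)
  dst p := fun k => (G k).dst (p.1.1 k)
  lab p := p.1.2

/-- Sofic shift spaces: those presented by some finite labeled graph. -/
def Sofic (X : Set (ℕ → A)) : Prop :=
  ∃ (V E : Type) (_ : Fintype V) (_ : Fintype E) (G : LabeledGraph A V E),
    X = G.presents

/-- The coded shift generated by a finite set of words `B`: the closure of the set of all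
shifts of infinite concatenations of words from `B`. -/
def codedShift (B : Finset (List A)) : Set (ℕ → A) :=
  closure {x | ∃ (b : ℕ → List A) (k : ℕ), (∀ i, b i ∈ B) ∧ x = shift^[k] (concatSeq b)}

end DbarPaper

namespace DbarPaper

theorem msigma_eq_of_isMeasureCenter {A : Type} [TopologicalSpace A] [MeasurableSpace A]
    {X C : Set (ℕ → A)} (hC : IsMeasureCenter X C) : Msigma X = Msigma C := by
  obtain ⟨-, hCX, hCfull, -⟩ := hC
  ext μ
  constructor
  · rintro ⟨hinv, hXμ⟩
    exact ⟨hinv, hCfull μ ⟨hinv, hXμ⟩⟩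
  · rintro ⟨hinv, hCμ⟩
    exact ⟨hinv, le_antisymm (μ.apply_le_one X) (hCμ ▸ μ.apply_mono hCX)⟩

theorem dbarMStable_congr {A : Type} [Fintype A] [TopologicalSpace A] [DiscreteTopology A]
    [MeasurableSpace A] [MeasurableSingletonClass A] {X Y : Set (ℕ → A)}
    (h : Msigma X = Msigma Y) : DbarMStable X ↔ DbarMStable Y := by
  rw [DbarMStable, DbarMStable, h]

variable {A : Type} [Fintype A] [DecidableEq A] [Inhabited A]
  [TopologicalSpace A] [DiscreteTopology A]
  [MeasurableSpace A] [MeasurableSingletonClass A]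

theorem statement3_general (X C : Set (ℕ → A))
    (hC : IsMeasureCenter X C) :
    DbarMStable X ↔ DbarMStable C :=
  dbarMStable_congr (msigma_eq_of_isMeasureCenter hC)

/-- `X` is `d̄_M`-stable iff its measure center is. -/
theorem statement3 (hA : 2 ≤ Fintype.card A) (X C : Set (ℕ → A)) (hX : ShiftSpace X)
    (hC : IsMeasureCenter X C) :
    DbarMStable X ↔ DbarMStable C :=
  statement3_general X C hC

end DbarPaper
end

section
/- Let G_k = (V_k, E_k, τ_k) for 1 ≤ k ≤ n be strongly connected 𝒜-labeled directed multigraphs which have a common safe symbol and pairwise coprime periods. Then their coupling G is strongly connected. -/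
/-!
In a strongly connected graph of period `d`, the lengths of closed paths at a vertex `v` form an
additive monoid with gcd `d`, so it contains every large multiple of `d`; prefixing a fixed path
from `u` to `v` gives paths from `u` to `v` of every large length in one residue class mod `d`.
For the coupling, pairwise coprime periods let the Chinese remainder theorem pick one length `ℓ`
in all these classes at once. Replacing every edge by the parallel `b`-edge, the `n` paths of
length `ℓ` carry the same label and hence form a single path of the coupling.
-/

open MeasureTheory Filter Topology

namespace DbarPaper

variable {A : Type} [Fintype A] [DecidableEq A] [Inhabited A]
  [TopologicalSpace A] [DiscreteTopology A]
  [MeasurableSpace A] [MeasurableSingletonClass A]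

namespace LabeledGraph

variable {A' V E : Type*} {G : LabeledGraph A' V E} {es fs : List E} {u v w : V} {d : ℕ}

theorem PathFromTo.ne_nil (h : G.PathFromTo es u v) : es ≠ [] := by
  rintro rfl
  simp [PathFromTo] at h

theorem PathFromTo.append (h₁ : G.PathFromTo es u v) (h₂ : G.PathFromTo fs v w) :
    G.PathFromTo (es ++ fs) u w := by
  obtain ⟨e, es', rfl⟩ := List.exists_cons_of_ne_nil h₁.ne_nil
  obtain ⟨f, fs', rfl⟩ := List.exists_cons_of_ne_nil h₂.ne_nil
  obtain ⟨hc₁, hs₁, ht₁⟩ := h₁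
  obtain ⟨hc₂, hs₂, ht₂⟩ := h₂
  refine ⟨List.IsChain.append hc₁ hc₂ fun e he f hf => ?_, by simpa using hs₁, ?_⟩
  · simp_all
  · rw [List.getLast?_append, List.getLast?_cons]
    simpa [List.getLast?_cons] using ht₂

theorem pathFromTo_iff_getElem :
    G.PathFromTo es u v ↔ ∃ h : 0 < es.length, G.src es[0] = u ∧
      G.dst es[es.length - 1] = v ∧ ∀ i (hi : i + 1 < es.length), G.dst es[i] = G.src es[i + 1] := by
  rw [PathFromTo, List.Chain', List.isChain_iff_getElem]
  cases es with
  | nil => simp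
  | cons e es => simp [List.getLast?_eq_some_getLast, List.getLast_eq_getElem]; tauto

def closedPathLengths (G : LabeledGraph A' V E) (v : V) : Set ℕ :=
  {ℓ | ∃ es, G.PathFromTo es v v ∧ es.length = ℓ}

theorem add_mem_closedPathLengths {ℓ m : ℕ} (hℓ : ℓ ∈ G.closedPathLengths v)
    (hm : m ∈ G.closedPathLengths v) : ℓ + m ∈ G.closedPathLengths v := by
  obtain ⟨es, hes, rfl⟩ := hℓ
  obtain ⟨fs, hfs, rfl⟩ := hm
  exact ⟨es ++ fs, hes.append hfs, List.length_append⟩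

theorem mem_closedPathLengths_of_mem_closure {ℓ : ℕ}
    (h : ℓ ∈ AddSubmonoid.closure (G.closedPathLengths v)) (hℓ : ℓ ≠ 0) :
    ℓ ∈ G.closedPathLengths v := by
  suffices ℓ = 0 ∨ ℓ ∈ G.closedPathLengths v from this.resolve_left hℓ
  clear hℓ
  induction h using AddSubmonoid.closure_induction with
  | mem m hm => exact .inr hm
  | zero => exact .inl rfl
  | add m k _ _ ihm ihk =>
    rcases ihm with rfl | ihm
    · simpa using ihk
    rcases ihk with rfl | ihk
    · exact .inr ihm
    exact .inr (add_mem_closedPathLengths ihm ihk)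

theorem setGcd_closedPathLengths (hconn : G.StronglyConnected) (hper : G.HasPeriod d) (v : V) :
    Nat.setGcd (G.closedPathLengths v) = d := by
  refine Nat.dvd_antisymm (hper.2 _ fun es w hes => ?_)
    (Nat.dvd_setGcd_iff.mpr fun _ ⟨es, hes, hlen⟩ => hlen ▸ hper.1 es v hes)
  -- a closed path at `w`, inserted into a detour `p ++ q` from `v` through `w`
  obtain ⟨p, hp⟩ := hconn v w
  obtain ⟨q, hq⟩ := hconn w v
  have h₁ : p.length + q.length ∈ G.closedPathLengths v :=
    ⟨p ++ q, hp.append hq, List.length_append⟩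
  have h₂ : p.length + q.length + es.length ∈ G.closedPathLengths v :=
    ⟨p ++ es ++ q, (hp.append hes).append hq, by simp; omega⟩
  replace h₁ := Nat.setGcd_dvd_of_mem h₁
  replace h₂ := Nat.setGcd_dvd_of_mem h₂
  exact (Nat.dvd_add_right h₁).mp h₂

theorem eventually_mem_closedPathLengths (hconn : G.StronglyConnected) (hper : G.HasPeriod d)
    (v : V) : ∃ N, ∀ ℓ ≥ N, d ∣ ℓ → ℓ ∈ G.closedPathLengths v := by
  obtain ⟨N, hN⟩ := Nat.exists_mem_closure_of_ge (G.closedPathLengths v)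
  rw [setGcd_closedPathLengths hconn hper] at hN
  exact ⟨N + 1, fun ℓ hℓ hd =>
    mem_closedPathLengths_of_mem_closure (hN ℓ (by omega) hd) (by omega)⟩

theorem exists_pathFromTo_of_modEq (hconn : G.StronglyConnected) (hper : G.HasPeriod d)
    (u v : V) : ∃ a N, ∀ ℓ ≥ N, ℓ ≡ a [MOD d] → ∃ es, G.PathFromTo es u v ∧ es.length = ℓ := by
  obtain ⟨p, hp⟩ := hconn u v
  obtain ⟨N, hN⟩ := eventually_mem_closedPathLengths hconn hper v
  refine ⟨p.length, p.length + N, fun ℓ hℓ hmod => ?_⟩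
  obtain ⟨c, hc, hlen⟩ := hN (ℓ - p.length) (by omega)
    ((Nat.modEq_iff_dvd' (by omega)).mp hmod.symm)
  exact ⟨p ++ c, hp.append hc, by simp [hlen]; omega⟩

theorem HasPeriod.pos (hconn : G.StronglyConnected) (hper : G.HasPeriod d) (v : V) : 0 < d := by
  obtain ⟨es, hes⟩ := hconn v v
  refine Nat.pos_of_ne_zero fun hd => hes.ne_nil ?_
  simpa [hd] using hper.1 es v hes

end LabeledGraph

open LabeledGraph

theorem exists_pathFromTo_coupling {A' : Type*} {n : ℕ} {V E : Fin n → Type*}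
    {G : ∀ k, LabeledGraph A' (V k) (E k)} {b : A'} (hsafe : ∀ k, (G k).SafeSymbol b)
    {u v : ∀ k, V k} {ℓ : ℕ} (hℓ : 0 < ℓ)
    (h : ∀ k, ∃ es, (G k).PathFromTo es (u k) (v k) ∧ es.length = ℓ) :
    ∃ cs, (coupling G).PathFromTo cs u v := by
  choose es hes hlen using h
  choose f hfsrc hfdst hflab using hsafe
  have hes' k := pathFromTo_iff_getElem.mp (hes k)
  let edge (j : Fin ℓ) : {p : (∀ k, E k) × A' // ∀ k, (G k).lab (p.1 k) = p.2} :=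
    ⟨(fun k => f k ((es k)[j.1]'(by rw [hlen k]; exact j.2)), b), fun k => hflab k _⟩
  refine ⟨List.ofFn edge, pathFromTo_iff_getElem.mpr ⟨by simpa using hℓ, ?_, ?_, ?_⟩⟩
  · funext k
    simpa [coupling, edge, hfsrc] using (hes' k).2.1
  · funext k
    simpa [coupling, edge, hfdst, hlen] using (hes' k).2.2.1
  · intro i hi
    funext k
    simpa [coupling, edge, hfsrc, hfdst] using (hes' k).2.2.2 i (by simp [hlen] at hi ⊢; omega)

theorem exists_ge_forall_modEq {ι : Type*} [Fintype ι] {d : ι → ℕ} (hd : ∀ i, 0 < d i)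
    (hcop : Pairwise fun i j => Nat.Coprime (d i) (d j)) (a : ι → ℕ) (N : ℕ) :
    ∃ ℓ ≥ N, ∀ i, ℓ ≡ a i [MOD d i] := by
  obtain ⟨c, hc⟩ := Nat.chineseRemainderOfFinset a d Finset.univ (fun i _ => (hd i).ne')
    (hcop.set_pairwise _)
  have hprod : 0 < ∏ i, d i := Finset.prod_pos fun i _ => hd i
  refine ⟨c + N * ∏ i, d i, by nlinarith, fun i => ?_⟩
  have hdvd : N * ∏ i, d i ≡ 0 [MOD d i] :=
    Nat.modEq_zero_iff_dvd.mpr ((Finset.dvd_prod_of_mem d (Finset.mem_univ i)).mul_left N)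
  simpa using (hdvd.add_left c).trans (hc i (Finset.mem_univ i))

theorem statement13_general {A' : Type} (n : ℕ) (V E : Fin n → Type)
    (G : ∀ k, LabeledGraph A' (V k) (E k))
    (hconn : ∀ k, (G k).StronglyConnected)
    (b : A') (hsafe : ∀ k, (G k).SafeSymbol b)
    (d : Fin n → ℕ) (hper : ∀ k, (G k).HasPeriod (d k))
    (hcop : ∀ k j, k ≠ j → Nat.Coprime (d k) (d j)) :
    (coupling G).StronglyConnected := by
  intro u v
  choose a N hpath using fun k => exists_pathFromTo_of_modEq (hconn k) (hper k) (u k) (v k)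
  -- the `+ 1` keeps `ℓ` positive, which the coupling needs even when `n = 0`
  obtain ⟨ℓ, hℓ, hmod⟩ := exists_ge_forall_modEq (fun k => (hper k).pos (hconn k) (u k))
    (fun k j hkj => hcop k j hkj) a (∑ k, N k + 1)
  have hN k : N k ≤ ℓ :=
    (Finset.single_le_sum (fun _ _ => Nat.zero_le _) (Finset.mem_univ k)).trans (by omega)
  exact exists_pathFromTo_coupling hsafe (by omega) fun k => hpath k ℓ (hN k) (hmod k)

/-- a coupling of strongly connected labeled graphs with a common safe
symbol and pairwise coprime periods is strongly connected. -/
theorem statement13 {A' : Type} [Fintype A'] (n : ℕ) (V E : Fin n → Type)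
    [∀ k, Fintype (V k)] [∀ k, Fintype (E k)]
    (G : ∀ k, LabeledGraph A' (V k) (E k))
    (hconn : ∀ k, (G k).StronglyConnected)
    (b : A') (hsafe : ∀ k, (G k).SafeSymbol b)
    (d : Fin n → ℕ) (hper : ∀ k, (G k).HasPeriod (d k))
    (hcop : ∀ k j, k ≠ j → Nat.Coprime (d k) (d j)) :
    (coupling G).StronglyConnected :=
  statement13_general n V E G hconn b hsafe d hper hcop

end DbarPaper
end

section
/- Let B_1 be a finite nonempty set of nonempty words over {0,1} and let (t(n))_{n≥1} be any sequence of integers with t(n) ≥ 2. Define inductively B_{n+1} = {b_1 b_2 ⋯ b_{t(n)} τ(n) : b_i ∈ B_n}, where τ(n) is the concatenation of all elements of B_n (in a fixed enumeration), let X_n be the coded shift generated by B_n, and let X = ⋂_{n≥1} X_n. Then X is a minimal shift space. -/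
open MeasureTheory Filter Topology

namespace DbarPaper

variable {A : Type} [Fintype A] [DecidableEq A] [Inhabited A]
  [TopologicalSpace A] [DiscreteTopology A]
  [MeasurableSpace A] [MeasurableSingletonClass A]

/-!
Each word of `B (n + 1)` is a concatenation of words of `B n`, so the coded shifts decrease
and their intersection is a shift space by compactness. Words of `B n` have length at least
`n`, so a window of length `n` of a point of `X_n` lies inside a concatenation `b b'` of two
words of `B n`. That concatenation occurs in a word of `B (n + 1)`, and because `τ (n + 1)`
lists every word of `B (n + 1)`, it occurs in every word of `B (n + 2)`. Every point of
`X_{n + 2}` contains a whole word of `B (n + 2)`, so each window of one point of `X` occurs in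
every other point of `X`, and the orbit of any point of `X` is dense in `X`.
-/

section Words

variable {α : Type}

theorem exists_infix_append_of_infix_flatten {u : List α} (hu : u ≠ []) :
    ∀ {cs : List (List α)}, (∀ c ∈ cs, u.length ≤ c.length) → u <:+: cs.flatten →
      ∃ b ∈ cs, ∃ b' ∈ cs, u <:+: b ++ b'
  | [], _, h => absurd (List.eq_nil_of_infix_nil h) hu
  | c :: cs, hlen, h => by
    rw [List.flatten_cons, List.infix_append_iff] at h
    rcases h with h | h | ⟨s, p, rfl, hs, hp⟩
    · exact ⟨c, by simp, c, by simp, h.trans List.infix_append_left⟩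
    · obtain ⟨b, hb, b', hb', h⟩ :=
        exists_infix_append_of_infix_flatten hu (fun d hd => hlen d (.tail _ hd)) h
      exact ⟨b, .tail _ hb, b', .tail _ hb', h⟩
    · obtain ⟨d, hd, hpd⟩ : ∃ d ∈ c :: cs, p <+: d := by
        cases cs with
        | nil => exact ⟨c, by simp, by simp [List.eq_nil_of_prefix_nil hp]⟩
        | cons d ds =>
          refine ⟨d, by simp, List.prefix_of_prefix_length_le hp (by simp) ?_⟩
          have := hlen d (by simp)
          simp only [List.length_append] at this
          omega
      exact ⟨c, by simp, d, hd, List.infix_append_iff.2 (.inr (.inr ⟨s, p, rfl, hs, hpd⟩))⟩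

theorem exists_infix_of_infix_flatten {R : ℕ} :
    ∀ {cs : List (List α)} {v : List α}, (∀ c ∈ cs, c.length ≤ R) → v <:+: cs.flatten →
      2 * R < v.length → ∃ c ∈ cs, c <:+: v
  | [], v, _, h, hv => by simp [List.eq_nil_of_infix_nil h] at hv
  | c :: cs, v, hlen, h, hv => by
    have hc := hlen c (by simp)
    rw [List.flatten_cons, List.infix_append_iff] at h
    rcases h with h | h | ⟨s, p, rfl, hs, hp⟩
    · have := h.length_le
      omega
    · obtain ⟨d, hd, h⟩ := exists_infix_of_infix_flatten (fun d hd => hlen d (.tail _ hd)) h hv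
      exact ⟨d, .tail _ hd, h⟩
    · have hsc := hs.length_le
      simp only [List.length_append] at hv
      cases cs with
      | nil => simp [List.eq_nil_of_prefix_nil hp] at hv; omega
      | cons d ds =>
        have hd := hlen d (by simp)
        have hdp : d <+: p := List.prefix_of_prefix_length_le (by simp) hp (by omega)
        exact ⟨d, by simp, hdp.isInfix.trans List.infix_append_right⟩

theorem exists_flatten_eq_flatten {C D : Set (List α)}
    (hCD : ∀ c ∈ C, ∃ ds : List (List α), (∀ d ∈ ds, d ∈ D) ∧ c = ds.flatten) :
    ∀ {cs : List (List α)}, (∀ c ∈ cs, c ∈ C) →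
      ∃ ds : List (List α), (∀ d ∈ ds, d ∈ D) ∧ cs.flatten = ds.flatten
  | [], _ => ⟨[], by simp⟩
  | c :: cs, hcs => by
    obtain ⟨ds, hds, rfl⟩ := hCD c (hcs c (by simp))
    obtain ⟨es, hes, hflat⟩ := exists_flatten_eq_flatten hCD fun c hc => hcs c (.tail _ hc)
    refine ⟨ds ++ es, fun d hd => ?_, by simp [hflat]⟩
    rcases List.mem_append.1 hd with hd | hd
    exacts [hds d hd, hes d hd]

end Words

section Windows

variable {α : Type}

def window (x : ℕ → α) (i n : ℕ) : List α := List.ofFn fun k : Fin n => x (i + (k : ℕ))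

@[simp] theorem length_window (x : ℕ → α) (i n : ℕ) : (window x i n).length = n := by
  simp [window]

theorem window_add (x : ℕ → α) (i m n : ℕ) :
    window x i (m + n) = window x i m ++ window x (i + m) n := by
  simp [window, List.ofFn_add, add_assoc]

theorem shift_iterate_apply (x : ℕ → α) (k n : ℕ) : shift^[k] x n = x (k + n) := by
  induction k generalizing x with
  | zero => simp
  | succ k ih => rw [Function.iterate_succ_apply, ih, shift, add_right_comm, add_assoc]

theorem window_shift_iterate (x : ℕ → α) (k i n : ℕ) :
    window (shift^[k] x) i n = window x (k + i) n := by
  simp [window, shift_iterate_apply, add_assoc]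

theorem window_infix_window (x : ℕ → α) {i n N : ℕ} (h : i + n ≤ N) :
    window x i n <:+: window x 0 N := by
  obtain ⟨r, rfl⟩ := Nat.exists_eq_add_of_le h
  rw [window_add, window_add, zero_add]
  exact List.infix_append _ _ _

theorem occursIn_of_infix_window {x : ℕ → α} {u : List α} {i N : ℕ}
    (h : u <:+: window x i N) : occursIn u x := by
  obtain ⟨s, t, h⟩ := h
  have hN : N = s.length + u.length + t.length := by
    simpa [add_assoc] using congrArg List.length h.symm
  rw [hN, window_add, window_add] at h
  obtain ⟨hsu, -⟩ := List.append_inj h (by simp)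
  exact ⟨i + s.length, (List.append_inj hsu (by simp)).2⟩

theorem exists_window_eq_of_occursIn {w : List α} {x : ℕ → α} (h : occursIn w x) :
    ∃ i, window x i w.length = w := by
  obtain ⟨i, hi⟩ := h
  exact ⟨i, hi.symm⟩

theorem mem_closure_iff_forall_window [TopologicalSpace α] [DiscreteTopology α]
    {S : Set (ℕ → α)} {x : ℕ → α} :
    x ∈ closure S ↔ ∀ n, ∃ z ∈ S, window z 0 n = window x 0 n := by
  have hcyl : ∀ z n, z ∈ PiNat.cylinder x n ↔ window z 0 n = window x 0 n := fun z n => by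
    simp [PiNat.mem_cylinder_iff, window, List.ofFn_inj, funext_iff, Fin.forall_iff]
  rw [(PiNat.isTopologicalBasis_cylinders fun _ => α).mem_closure_iff]
  constructor
  · intro h n
    obtain ⟨z, hz, hzS⟩ := h _ ⟨x, n, rfl⟩ (PiNat.self_mem_cylinder x n)
    exact ⟨z, hzS, (hcyl z n).1 hz⟩
  · rintro h _ ⟨y, n, rfl⟩ hx
    obtain ⟨z, hzS, hz⟩ := h n
    rw [← PiNat.mem_cylinder_iff_eq.1 hx]
    exact ⟨z, (hcyl z n).2 hz, hzS⟩

end Windows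

section Concatenation

variable {α : Type}

def concatPrefix (b : ℕ → List α) (m : ℕ) : List α := (List.ofFn fun i : Fin m => b i).flatten

theorem concatPrefix_add (b : ℕ → List α) (m k : ℕ) :
    concatPrefix b (m + k) = concatPrefix b m ++ concatPrefix (fun i => b (m + i)) k := by
  simp [concatPrefix, List.ofFn_add]

theorem concatPrefix_prefix (b : ℕ → List α) {m m' : ℕ} (h : m ≤ m') :
    concatPrefix b m <+: concatPrefix b m' := by
  obtain ⟨k, rfl⟩ := Nat.exists_eq_add_of_le h
  rw [concatPrefix_add]
  exact List.prefix_append _ _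

theorem le_length_concatPrefix {b : ℕ → List α} (hb : ∀ i, b i ≠ []) (m : ℕ) :
    m ≤ (concatPrefix b m).length := by
  induction m with
  | zero => simp
  | succ m ih =>
    have hlast : concatPrefix (fun i => b (m + i)) 1 = b m := by simp [concatPrefix]
    have := List.length_pos_iff.2 (hb m)
    rw [concatPrefix_add, List.length_append, hlast]
    omega

theorem window_concatSeq [Inhabited α] {b : ℕ → List α} (hb : ∀ i, b i ≠ []) (m : ℕ) :
    window (concatSeq b) 0 (concatPrefix b m).length = concatPrefix b m := by
  refine List.ext_getElem (by simp) fun n hn hm => ?_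
  have hn' : n < (concatPrefix b (n + 1)).length := le_length_concatPrefix hb (n + 1)
  simp only [window, List.getElem_ofFn, zero_add]
  change (concatPrefix b (n + 1)).getD n default = _
  rw [List.getD_eq_getElem _ _ hn']
  rcases le_total m (n + 1) with h | h
  · exact ((concatPrefix_prefix b h).getElem hm).symm
  · exact (concatPrefix_prefix b h).getElem hn'

end Concatenation

section CodedShift

variable {α : Type} [Inhabited α] [TopologicalSpace α] [DiscreteTopology α]
  {C D : Finset (List α)}

theorem exists_infix_flatten_of_mem_codedShift (hCne : ∀ c ∈ C, c ≠ []) {x : ℕ → α}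
    (hx : x ∈ codedShift C) (n : ℕ) :
    ∃ cs : List (List α), (∀ c ∈ cs, c ∈ C) ∧ window x 0 n <:+: cs.flatten := by
  obtain ⟨_, ⟨b, k, hb, rfl⟩, hz⟩ := mem_closure_iff_forall_window.1 hx n
  have hbne : ∀ i, b i ≠ [] := fun i => hCne _ (hb i)
  refine ⟨List.ofFn fun i : Fin (k + n) => b i, by simp [List.mem_ofFn, hb], ?_⟩
  rw [← hz, window_shift_iterate, add_zero, ← concatPrefix, ← window_concatSeq hbne]
  exact window_infix_window _ (le_length_concatPrefix hbne _)

theorem mem_codedShift_of_forall_infix_flatten (hC : C.Nonempty) (hCne : ∀ c ∈ C, c ≠ [])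
    {x : ℕ → α}
    (hx : ∀ n, ∃ cs : List (List α), (∀ c ∈ cs, c ∈ C) ∧ window x 0 n <:+: cs.flatten) :
    x ∈ codedShift C := by
  obtain ⟨b₀, hb₀⟩ := hC
  refine mem_closure_iff_forall_window.2 fun n => ?_
  obtain ⟨cs, hcs, hx⟩ := hx n
  set b : ℕ → List α := fun i => cs.getD i b₀
  have hb : ∀ i, b i ∈ C := fun i => by
    change cs.getD i b₀ ∈ C
    by_cases hi : i < cs.length
    · rw [List.getD_eq_getElem _ _ hi]
      exact hcs _ (List.getElem_mem hi)
    · rwa [List.getD_eq_default _ _ (not_lt.1 hi)]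
  have hflat : concatPrefix b cs.length = cs.flatten := by
    simp [concatPrefix, b, List.ofFn_getElem]
  rw [← hflat, ← window_concatSeq fun i => hCne _ (hb i)] at hx
  obtain ⟨q, hq⟩ := exists_window_eq_of_occursIn (occursIn_of_infix_window hx)
  refine ⟨shift^[q] (concatSeq b), ⟨b, q, hb, rfl⟩, ?_⟩
  rw [window_shift_iterate, add_zero]
  simpa using hq

theorem shiftSpace_codedShift (hC : C.Nonempty) (hCne : ∀ c ∈ C, c ≠ []) :
    ShiftSpace (codedShift C) := by
  obtain ⟨b₀, hb₀⟩ := hC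
  refine ⟨⟨_, subset_closure ⟨fun _ => b₀, 0, fun _ => hb₀, rfl⟩⟩, isClosed_closure,
    fun x hx => mem_codedShift_of_forall_infix_flatten ⟨b₀, hb₀⟩ hCne fun n => ?_⟩
  obtain ⟨cs, hcs, hx⟩ := exists_infix_flatten_of_mem_codedShift hCne hx (n + 1)
  refine ⟨cs, hcs, List.IsInfix.trans ?_ hx⟩
  rw [← Function.iterate_one shift, window_shift_iterate]
  exact window_infix_window x (by omega)

theorem codedShift_subset_codedShift (hD : D.Nonempty) (hCne : ∀ c ∈ C, c ≠ [])
    (hDne : ∀ d ∈ D, d ≠ [])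
    (hCD : ∀ c ∈ C, ∃ ds : List (List α), (∀ d ∈ ds, d ∈ D) ∧ c = ds.flatten) :
    codedShift C ⊆ codedShift D := fun x hx =>
  mem_codedShift_of_forall_infix_flatten hD hDne fun n => by
    obtain ⟨cs, hcs, hx⟩ := exists_infix_flatten_of_mem_codedShift hCne hx n
    obtain ⟨ds, hds, hflat⟩ := exists_flatten_eq_flatten hCD fun c hc => hcs c hc
    exact ⟨ds, hds, hflat ▸ hx⟩

theorem exists_infix_append_of_mem_codedShift (hCne : ∀ c ∈ C, c ≠ []) {x : ℕ → α}
    (hx : x ∈ codedShift C) {i n : ℕ} (hn : 0 < n) (hlen : ∀ c ∈ C, n ≤ c.length) :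
    ∃ b ∈ C, ∃ b' ∈ C, window x i n <:+: b ++ b' := by
  obtain ⟨cs, hcs, hx⟩ := exists_infix_flatten_of_mem_codedShift hCne hx (i + n)
  obtain ⟨b, hb, b', hb', h⟩ := exists_infix_append_of_infix_flatten
    (List.ne_nil_of_length_pos (by simpa using hn))
    (fun c hc => by simpa using hlen c (hcs c hc)) ((window_infix_window x le_rfl).trans hx)
  exact ⟨b, hcs b hb, b', hcs b' hb', h⟩

theorem occursIn_of_forall_infix (hCne : ∀ c ∈ C, c ≠ []) {u : List α}
    (hu : ∀ c ∈ C, u <:+: c) {y : ℕ → α} (hy : y ∈ codedShift C) : occursIn u y := by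
  obtain ⟨R, hR⟩ : ∃ R, ∀ c ∈ C, c.length ≤ R := ⟨_, fun c hc => Finset.le_sup hc⟩
  -- a window of length `2 R + 1` contains a whole code word
  obtain ⟨cs, hcs, hy⟩ := exists_infix_flatten_of_mem_codedShift hCne hy (2 * R + 1)
  obtain ⟨c, hc, hcy⟩ := exists_infix_of_infix_flatten
    (fun c hc => hR c (hcs c hc)) hy (by simp)
  exact occursIn_of_infix_window ((hu c (hcs c hc)).trans hcy)

end CodedShift

section Minimality

variable {α : Type} [TopologicalSpace α]

theorem shiftSpace_iInter [CompactSpace α] {X : ℕ → Set (ℕ → α)} (hX : ∀ n, ShiftSpace (X n))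
    (hanti : ∀ n, X (n + 1) ⊆ X n) : ShiftSpace (⋂ n, X n) :=
  ⟨IsCompact.nonempty_iInter_of_sequence_nonempty_isCompact_isClosed X hanti
      (fun n => (hX n).1) (hX 0).2.1.isCompact fun n => (hX n).2.1,
    isClosed_iInter fun n => (hX n).2.1,
    fun x hx => Set.mem_iInter.2 fun n => (hX n).2.2 x (Set.mem_iInter.1 hx n)⟩

theorem minimalShift_of_forall_occursIn [DiscreteTopology α] {X : Set (ℕ → α)}
    (hX : ShiftSpace X) (h : ∀ x ∈ X, ∀ y ∈ X, ∀ n, occursIn (window x 0 n) y) :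
    MinimalShift X := by
  refine ⟨hX, fun Y hY hYX => hYX.antisymm fun x hx => ?_⟩
  obtain ⟨y, hy⟩ := hY.1
  rw [← hY.2.1.closure_eq, mem_closure_iff_forall_window]
  intro n
  obtain ⟨q, hq⟩ := exists_window_eq_of_occursIn (h x hx y (hYX hy) n)
  refine ⟨shift^[q] y, Set.MapsTo.iterate hY.2.2 q hy, ?_⟩
  rw [window_shift_iterate, add_zero]
  simpa using hq

end Minimality

section RecursiveCodes

variable {α : Type}

def nextCode (B : Finset (List α)) (t : ℕ) (τ : List α) : Set (List α) :=
  {w | ∃ bs : List (List α), bs.length = t ∧ (∀ b ∈ bs, b ∈ B) ∧ w = bs.flatten ++ τ}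

theorem nextCode_nonempty {B : Finset (List α)} (hB : B.Nonempty) (t : ℕ) (τ : List α) :
    (nextCode B t τ).Nonempty := by
  obtain ⟨b, hb⟩ := hB
  exact ⟨_, List.replicate t b, List.length_replicate,
    fun c hc => List.eq_of_mem_replicate hc ▸ hb, rfl⟩

theorem mul_le_length_of_mem_nextCode {B : Finset (List α)} {t m : ℕ} {τ w : List α}
    (hB : ∀ b ∈ B, m ≤ b.length) (hw : w ∈ nextCode B t τ) : t * m ≤ w.length := by
  obtain ⟨bs, rfl, hbs, rfl⟩ := hw
  have : (bs.map List.length).length • m ≤ (bs.map List.length).sum :=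
    List.card_nsmul_le_sum _ m fun _ hl => by
      obtain ⟨b, hb, rfl⟩ := List.mem_map.1 hl
      exact hB b (hbs b hb)
  simp only [smul_eq_mul, List.length_map, List.length_append, List.length_flatten] at this ⊢
  omega

theorem exists_append_infix_mem_nextCode {B : Finset (List α)} {t : ℕ} (ht : 2 ≤ t)
    (τ : List α) {b b' : List α} (hb : b ∈ B) (hb' : b' ∈ B) :
    ∃ w ∈ nextCode B t τ, b ++ b' <:+: w := by
  set rest := (List.replicate (t - 2) b).flatten ++ τ
  refine ⟨b ++ b' ++ rest, ⟨b :: b' :: List.replicate (t - 2) b, by simp; omega,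
    fun c hc => ?_, by simp [rest]⟩, List.infix_append [] _ _⟩
  simp only [List.mem_cons] at hc
  rcases hc with rfl | rfl | hc
  exacts [hb, hb', List.eq_of_mem_replicate hc ▸ hb]

theorem infix_of_mem_nextCode {B : Finset (List α)} {t : ℕ} {τ b w : List α}
    (hτ : ∃ l : List (List α), l.Perm B.toList ∧ τ = l.flatten) (hb : b ∈ B)
    (hw : w ∈ nextCode B t τ) : b <:+: w := by
  obtain ⟨l, hl, rfl⟩ := hτ
  obtain ⟨bs, -, -, rfl⟩ := hw
  exact (List.infix_of_mem_flatten (hl.mem_iff.2 (Finset.mem_toList.2 hb))).trans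
    List.infix_append_right

theorem exists_flatten_of_mem_nextCode {B : Finset (List α)} {t : ℕ} {τ w : List α}
    (hτ : ∃ l : List (List α), l.Perm B.toList ∧ τ = l.flatten) (hw : w ∈ nextCode B t τ) :
    ∃ cs : List (List α), (∀ c ∈ cs, c ∈ B) ∧ w = cs.flatten := by
  obtain ⟨l, hl, rfl⟩ := hτ
  obtain ⟨bs, -, hbs, rfl⟩ := hw
  refine ⟨bs ++ l, fun c hc => ?_, by simp⟩
  rcases List.mem_append.1 hc with hc | hc
  exacts [hbs c hc, Finset.mem_toList.1 (hl.mem_iff.1 hc)]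

variable {B : ℕ → Finset (List α)} {t : ℕ → ℕ} {τ : ℕ → List α}

theorem nonempty_of_nextCode (hB1 : (B 1).Nonempty)
    (hrec : ∀ n, 1 ≤ n → (B (n + 1) : Set (List α)) = nextCode (B n) (t n) (τ n)) :
    ∀ n, 1 ≤ n → (B n).Nonempty := by
  refine Nat.le_induction hB1 fun n hn ih => ?_
  rw [← Finset.coe_nonempty, hrec n hn]
  exact nextCode_nonempty ih _ _

theorem le_length_of_nextCode (hB1 : ∀ w ∈ B 1, w ≠ []) (ht : ∀ n, 1 ≤ n → 2 ≤ t n)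
    (hrec : ∀ n, 1 ≤ n → (B (n + 1) : Set (List α)) = nextCode (B n) (t n) (τ n)) :
    ∀ n, 1 ≤ n → ∀ w ∈ B n, n ≤ w.length := by
  refine Nat.le_induction (fun w hw => List.length_pos_iff.2 (hB1 w hw)) fun n hn ih w hw => ?_
  have hw : w ∈ nextCode (B n) (t n) (τ n) := hrec n hn ▸ Finset.mem_coe.2 hw
  have := mul_le_length_of_mem_nextCode ih hw
  nlinarith [ht n hn]

theorem append_infix_of_nextCode (ht : ∀ n, 1 ≤ n → 2 ≤ t n)
    (hτ : ∀ n, 1 ≤ n → ∃ l : List (List α), l.Perm (B n).toList ∧ τ n = l.flatten)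
    (hrec : ∀ n, 1 ≤ n → (B (n + 1) : Set (List α)) = nextCode (B n) (t n) (τ n))
    {n : ℕ} (hn : 1 ≤ n) {b b' w : List α} (hb : b ∈ B n) (hb' : b' ∈ B n)
    (hw : w ∈ B (n + 2)) : b ++ b' <:+: w := by
  obtain ⟨v, hv, hbv⟩ := exists_append_infix_mem_nextCode (ht n hn) (τ n) hb hb'
  rw [← hrec n hn] at hv
  exact hbv.trans <| infix_of_mem_nextCode (hτ (n + 1) (by omega)) hv <|
    hrec (n + 1) (by omega) ▸ Finset.mem_coe.2 hw

end RecursiveCodes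

/-- the intersection of the coded shifts generated by the recursively
defined codes `B_n` is a minimal shift space. -/
theorem statement16 (B : ℕ → Finset (List Bool)) (t : ℕ → ℕ) (τ : ℕ → List Bool)
    (hB1ne : (B 1).Nonempty) (hB1words : ∀ w ∈ B 1, w ≠ [])
    (ht : ∀ n : ℕ, 1 ≤ n → 2 ≤ t n)
    (hτ : ∀ n : ℕ, 1 ≤ n → ∃ l : List (List Bool), l.Perm (B n).toList ∧ τ n = l.flatten)
    (hrec : ∀ n : ℕ, 1 ≤ n → (B (n + 1) : Set (List Bool)) =
      {w | ∃ bs : List (List Bool), bs.length = t n ∧ (∀ b ∈ bs, b ∈ B n) ∧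
        w = bs.flatten ++ τ n}) :
    MinimalShift (⋂ n : ℕ, codedShift (B (n + 1))) := by
  have hne : ∀ n, (B (n + 1)).Nonempty := fun n => nonempty_of_nextCode hB1ne hrec _ n.succ_pos
  have hlen : ∀ n, ∀ w ∈ B (n + 1), n + 1 ≤ w.length :=
    fun n => le_length_of_nextCode hB1words ht hrec _ n.succ_pos
  have hnil : ∀ n, ∀ w ∈ B (n + 1), w ≠ [] :=
    fun n w hw => List.ne_nil_of_length_pos ((hlen n w hw).trans_lt' n.succ_pos)
  have hX : ShiftSpace (⋂ n : ℕ, codedShift (B (n + 1))) :=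
    shiftSpace_iInter (fun n => shiftSpace_codedShift (hne n) (hnil n)) fun n =>
      codedShift_subset_codedShift (hne n) (hnil (n + 1)) (hnil n) fun w hw =>
        exists_flatten_of_mem_nextCode (hτ _ n.succ_pos) ((hrec (n + 1) n.succ_pos).subset hw)
  refine minimalShift_of_forall_occursIn hX fun x hx y hy n => ?_
  obtain rfl | hn := n.eq_zero_or_pos
  · exact ⟨0, rfl⟩
  obtain ⟨b, hb, b', hb', hbb'⟩ := exists_infix_append_of_mem_codedShift (hnil n)
    (Set.mem_iInter.1 hx n) hn fun c hc => (hlen n c hc).trans' n.le_succ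
  exact occursIn_of_forall_infix (hnil _)
    (fun c hc => hbb'.trans (append_infix_of_nextCode ht hτ hrec (by omega) hb hb' hc))
    (Set.mem_iInter.1 hy (n + 2))

end DbarPaper
end
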